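/- Let φ be the morphism a ↦ ab, b ↦ a, and let x: ℤ → {a,b} be the bi-infinite fixed point of φ² with seed b.a, i.e., x = lim_{k→∞} φ^{2k}(b.a) where x restricted to [0,∞) is lim φ^{2k}(a) and x restricted to (−∞,0) is the sequence of right-aligned words φ^{2k}(b). Then for every n ∈ ℤ with n ∉ {−1, 0}, there exist m ∈ ℤ and ℓ ∈ {0,1,2} such that x_n = φ²(x_m)[ℓ] (the letter at index ℓ of the word φ²(x_m)) and rep_F(n) = rep_F(m) · h(ℓ), where h: 0 ↦ 00, 1 ↦ 01, 2 ↦ 10. Moreover, if n ∈ I_i \ I_{i−1} then m ∈ I_{i−1} \ I_{i−2}. -/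

import Mathlib

/-- Fibonacci sequence with `F 0 = 1`, `F 1 = 1`, `F 2 = 2`. -/
def F : ℕ → ℤ
  | 0 => 1
  | 1 => 1
  | (n+2) => F (n+1) + F n

/-- Numerical value of a binary digit. -/
def bv (x : Bool) : ℤ := if x then 1 else 0

/-- Value of an odd-length binary word `w = w_{2k+1} ⋯ w_1` (most significant
digit first): `val_F(w) = Σ_{i=1}^{2k} w_i F_i − w_{2k+1} F_{2k}`. -/
def valF (w : List Bool) : ℤ :=
  (∑ i ∈ Finset.range (w.length - 1), bv (w.reverse.getD i false) * F (i+1))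
    - bv (w.reverse.getD (w.length - 1) false) * F (w.length - 1)

/-- The word has no factor `11`. -/
def no11 (w : List Bool) : Prop :=
  List.Chain' (fun x y => ¬(x = true ∧ y = true)) w

/-- Words of the canonical representation language: odd length, no factor 11,
not beginning with 000 nor with 101. -/
def IsRep (w : List Bool) : Prop :=
  Odd w.length ∧ no11 w ∧
    ¬ ([false, false, false] <+: w) ∧ ¬ ([true, false, true] <+: w)

/-- `Ik k = {i ∈ ℤ : −F_{2k} ≤ i < F_{2k+1}}`. -/
def Ik (k : ℕ) : Set ℤ := {i : ℤ | -F (2*k) ≤ i ∧ i < F (2*k+1)}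

/-- Shifted version of `Ik` incorporating `I_{−1} = ∅`. -/
def Iext : ℕ → Set ℤ
  | 0 => ∅
  | (k+1) => Ik k

/-- The morphism `h : 0 ↦ 00, 1 ↦ 01, 2 ↦ 10` on single letters. -/
def h3 : Fin 3 → List Bool
  | 0 => [false, false]
  | 1 => [false, true]
  | 2 => [true, false]

/-- The Fibonacci morphism `φ : a ↦ ab, b ↦ a` applied to a letter,
where `a` is encoded by `false` and `b` by `true`. -/
def phiL (c : Bool) : List Bool := if c then [false] else [false, true]

/-- The Fibonacci morphism `φ` on words. -/
def phi (w : List Bool) : List Bool := w.flatMap phiL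

/-- `φ²` applied to a letter: `φ²(a) = aba`, `φ²(b) = ab`. -/
def phi2L (c : Bool) : List Bool := phi (phiL c)

/-!
Let `W_k = φ^{2k}(b) φ^{2k}(a)`: it is the word `x` on `I_k`, with the origin after its first
`F_{2k}` letters, and `W_{k+1} = φ²(W_k)`. By induction on `k`, for every representation `w` of
length `2k+1` the letter of `x` at `valF w` is the last digit of `w`, and `φ²` maps this letter to
the block of `x` starting at `valF (w ++ 00)`. The induction step compares two recurrences of the
same shape: `|φ⁴(v)| = 3|φ²(v)| - |v|` and `valF (w ++ 0000) = 3 valF (w ++ 00) - valF w`.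
Splitting `rep_F(n) = rep_F(m) ++ h(ℓ)` (the last two digits are never `11`) gives
`n = valF (rep_F(m) ++ 00) + ℓ`, so `x_n` is the letter `ℓ` of `φ²(x_m)`. Since a representation
of length `2i+1` has its value in `I_i \ I_{i-1}`, these shells are indexed by the length of the
representation, which gives the last claim.
-/

/-! ### Fibonacci numbers and Fibonacci-weighted digit words -/

theorem F_eq_fib (n : ℕ) : F n = Nat.fib (n + 1) := by
  induction n using Nat.twoStepInduction with
  | zero => rfl
  | one => rfl
  | more n ih₀ ih₁ => rw [F, ih₀, ih₁, Nat.fib_add_two (n := n + 1)]; push_cast; ring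

theorem F_add_two (n : ℕ) : F (n + 2) = F (n + 1) + F n := rfl

theorem F_pos (n : ℕ) : 0 < F n := by
  rw [F_eq_fib]; exact_mod_cast Nat.fib_pos.mpr n.succ_pos

theorem F_mono : Monotone F := fun a b hab => by
  rw [F_eq_fib, F_eq_fib]; exact_mod_cast Nat.fib_mono (by omega)

theorem F_add_four (n : ℕ) : F (n + 4) = 3 * F (n + 2) - F n := by
  simp only [F_add_two]; ring

/-- `fibValFrom s j = Σ_i s_i F_{i+j}`: the value of `s` read least significant digit first,
with weights starting at `F_j`. -/
def fibValFrom : List Bool → ℕ → ℤ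
  | [], _ => 0
  | c :: s, j => bv c * F j + fibValFrom s (j + 1)

theorem bv_nonneg (c : Bool) : 0 ≤ bv c := by cases c <;> decide

theorem fibValFrom_nonneg (s : List Bool) (j : ℕ) : 0 ≤ fibValFrom s j := by
  induction s generalizing j with
  | nil => exact le_rfl
  | cons c s ih => exact add_nonneg (mul_nonneg (bv_nonneg c) (F_pos j).le) (ih _)

theorem fibValFrom_append (s t : List Bool) (j : ℕ) :
    fibValFrom (s ++ t) j = fibValFrom s j + fibValFrom t (j + s.length) := by
  induction s generalizing j with
  | nil => simp [fibValFrom]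
  | cons c s ih =>
    simp only [List.cons_append, fibValFrom, ih, List.length_cons]
    rw [Nat.add_right_comm, Nat.add_assoc j]; ring

theorem fibValFrom_replicate_false (n j : ℕ) : fibValFrom (List.replicate n false) j = 0 := by
  induction n generalizing j with
  | zero => rfl
  | succ n ih => simp [List.replicate_succ, fibValFrom, ih, bv]

theorem fibValFrom_add_two (s : List Bool) (j : ℕ) :
    fibValFrom s (j + 2) = fibValFrom s (j + 1) + fibValFrom s j := by
  induction s generalizing j with
  | nil => rfl
  | cons c s ih =>
    simp only [fibValFrom, F_add_two, Nat.add_right_comm _ 2 1, ih]; ring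

theorem fibValFrom_succ_add_F_le : ∀ (r : List Bool) (j : ℕ), no11 r →
    fibValFrom r (j + 1) + F j ≤ F (j + r.length + 1)
  | [], j, _ => by simpa [fibValFrom] using F_mono (Nat.le_succ j)
  | false :: s, j, h => by
    have ih := fibValFrom_succ_add_F_le s (j + 1) h.tail
    have : F j ≤ F (j + 1) := F_mono (Nat.le_succ j)
    show bv false * F (j + 1) + fibValFrom s (j + 1 + 1) + F j ≤ F (j + (s.length + 1) + 1)
    rw [Nat.add_right_comm j 1 s.length] at ih
    rw [← Nat.add_assoc]
    simp only [bv, Bool.false_eq_true, if_false, zero_mul, zero_add]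
    omega
  | [true], j, _ => by simp [fibValFrom, bv, F_add_two]
  | true :: true :: s, _, h => absurd ⟨rfl, rfl⟩ (List.isChain_cons_cons.mp h).1
  | true :: false :: s, j, h => by
    have ih := fibValFrom_succ_add_F_le s (j + 2) h.tail.tail
    have := F_add_two j
    show bv true * F (j + 1) + (bv false * F (j + 2) + fibValFrom s (j + 2 + 1)) + F j
      ≤ F (j + (s.length + 2) + 1)
    rw [Nat.add_comm s.length 2, ← Nat.add_assoc]
    simp only [bv, Bool.false_eq_true, if_false, if_true, zero_mul, zero_add, one_mul]
    omega

theorem fibValFrom_one_lt (r : List Bool) (h : no11 r) : fibValFrom r 1 < F (r.length + 1) := by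
  have := fibValFrom_succ_add_F_le r 0 h
  simp only [Nat.zero_add] at this
  have := F_pos 0
  omega

theorem eq_of_fibValFrom_one_eq {r r' : List Bool} (hl : r.length = r'.length)
    (hr : no11 r) (hr' : no11 r') (h : fibValFrom r 1 = fibValFrom r' 1) : r = r' := by
  induction r using List.reverseRecOn generalizing r' with
  | nil => exact (List.length_eq_zero_iff.mp hl.symm).symm
  | append_singleton s a ih =>
    rcases List.eq_nil_or_concat' r' with rfl | ⟨t, b, rfl⟩
    · simp at hl
    have hst : s.length = t.length := by simpa using hl
    have hs := fibValFrom_one_lt s hr.left_of_append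
    have ht := fibValFrom_one_lt t hr'.left_of_append
    have := fibValFrom_nonneg s 1
    have := fibValFrom_nonneg t 1
    simp only [fibValFrom_append, fibValFrom, add_zero, Nat.add_comm 1, hst] at h hs
    -- the top digits agree, since the lower digits are worth less than the top weight
    obtain rfl : a = b := by
      cases a <;> cases b <;> simp only [bv, Bool.false_eq_true, if_false, if_true] at h <;>
        first | rfl | omega
    rw [ih hst hr.left_of_append hr'.left_of_append (by omega)]

theorem fibValFrom_eq_sum (s : List Bool) (j : ℕ) :
    fibValFrom s j = ∑ i ∈ Finset.range s.length, bv (s.getD i false) * F (i + j) := by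
  induction s generalizing j with
  | nil => rfl
  | cons c s ih =>
    simp only [fibValFrom, ih, List.length_cons, Finset.sum_range_succ', List.getD_cons_succ,
      List.getD_cons_zero, Nat.zero_add, Nat.add_right_comm _ 1 j, Nat.add_assoc _ j 1]
    ring

theorem valF_cons (T : Bool) (body : List Bool) :
    valF (T :: body) = fibValFrom body.reverse 1 - bv T * F body.length := by
  have hlen : body.reverse.length = body.length := List.length_reverse
  have hlow : ∀ i ∈ Finset.range body.length,
      bv ((body.reverse ++ [T]).getD i false) * F (i + 1)
        = bv (body.reverse.getD i false) * F (i + 1) := fun i hi => by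
    rw [List.getD_append _ _ _ _ (hlen ▸ Finset.mem_range.mp hi)]
  have htop : (body.reverse ++ [T]).getD body.length false = T := by
    rw [List.getD_append_right _ _ _ _ hlen.le, hlen, Nat.sub_self]; rfl
  rw [valF, List.reverse_cons, List.length_cons, Nat.add_sub_cancel, Finset.sum_congr rfl hlow,
    htop, fibValFrom_eq_sum, hlen]

theorem valF_cons_append (T : Bool) (body v : List Bool) :
    valF (T :: body ++ v) = fibValFrom v.reverse 1 + fibValFrom body.reverse (1 + v.length)
      - bv T * F (body.length + v.length) := by
  rw [List.cons_append, valF_cons, List.reverse_append, fibValFrom_append, List.length_reverse,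
    List.length_append]

theorem valF_append {u : List Bool} (hu : u ≠ []) (v : List Bool) :
    valF (u ++ v) = valF (u ++ List.replicate v.length false) + fibValFrom v.reverse 1 := by
  obtain ⟨T, body, rfl⟩ := List.exists_cons_of_ne_nil hu
  rw [valF_cons_append, valF_cons_append, List.reverse_replicate, fibValFrom_replicate_false,
    List.length_replicate]
  ring

-- Each weight, the negative leading one included, moves one Fibonacci index up.
theorem valF_append_replicate_add_two {u : List Bool} (hu : u ≠ []) (j : ℕ) :
    valF (u ++ List.replicate (j + 2) false)
      = valF (u ++ List.replicate (j + 1) false) + valF (u ++ List.replicate j false) := by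
  obtain ⟨T, body, rfl⟩ := List.exists_cons_of_ne_nil hu
  simp only [valF_cons_append, List.reverse_replicate, fibValFrom_replicate_false,
    List.length_replicate, ← Nat.add_assoc, fibValFrom_add_two, F_add_two]
  ring

theorem valF_append_h3 {u : List Bool} (hu : u ≠ []) (ℓ : Fin 3) :
    valF (u ++ h3 ℓ) = valF (u ++ [false, false]) + ℓ := by
  rw [valF_append hu]
  fin_cases ℓ <;> rfl

theorem valF_append_h3_append_zeros {u : List Bool} (hu : u ≠ []) (ℓ : Fin 3) :
    valF (u ++ h3 ℓ ++ [false, false])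
      = 3 * valF (u ++ [false, false]) - valF u + fibValFrom (h3 ℓ).reverse 3 := by
  have hz2 := valF_append_replicate_add_two hu 0
  have hz3 := valF_append_replicate_add_two hu 1
  have hz4 := valF_append_replicate_add_two hu 2
  have hlen : (h3 ℓ ++ [false, false]).length = 4 := by fin_cases ℓ <;> rfl
  have hdigits :
      fibValFrom (h3 ℓ ++ [false, false]).reverse 1 = fibValFrom (h3 ℓ).reverse 3 := by
    simp [List.reverse_append, fibValFrom, bv]
  simp only [List.replicate, List.append_nil] at hz2 hz3 hz4
  rw [List.append_assoc, valF_append hu, hlen, hdigits]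
  simp only [List.replicate]
  linarith

/-! ### Representations -/

theorem no11_reverse {w : List Bool} (h : no11 w) : no11 w.reverse :=
  List.isChain_reverse.mpr (h.imp fun _ _ hab ⟨ha, hb⟩ => hab ⟨hb, ha⟩)

theorem IsRep.exists_length_eq {w : List Bool} (hw : IsRep w) : ∃ k, w.length = 2 * k + 1 :=
  hw.1

theorem valF_cons_cons_cons (T d e : Bool) (body : List Bool) :
    valF (T :: d :: e :: body) = fibValFrom body.reverse 1 + bv e * F (body.length + 1)
      + bv d * F (body.length + 2) - bv T * F (body.length + 2) := by
  simp only [valF_cons, List.reverse_cons, List.append_assoc, List.singleton_append,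
    fibValFrom_append, fibValFrom, List.length_reverse, List.length_cons, Nat.add_comm 1]
  ring

theorem valF_lt_of_head_true {body : List Bool} {k : ℕ} (hw : IsRep (true :: body))
    (hl : body.length = 2 * k + 2) : valF (true :: body) < -F (2 * k) := by
  obtain ⟨d, e, rest, rfl⟩ : ∃ d e rest, body = d :: e :: rest := by
    match body, hl with
    | d :: e :: rest, _ => exact ⟨d, e, rest, rfl⟩
  obtain rfl : d = false := by
    cases d
    · rfl
    · exact absurd ⟨rfl, rfl⟩ (List.isChain_cons_cons.mp hw.2.1).1
  obtain rfl : e = false := by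
    cases e
    · rfl
    · exact absurd ⟨rest, rfl⟩ hw.2.2.2
  have hrest : rest.length = 2 * k := by simpa using hl
  have := fibValFrom_one_lt rest.reverse (no11_reverse hw.2.1.tail.tail.tail)
  rw [valF_cons_cons_cons]
  simp only [bv, List.length_reverse, hrest, Bool.false_eq_true, if_false, if_true] at this ⊢
  have := F_add_two (2 * k)
  omega

theorem le_valF_of_head_false {body : List Bool} {k : ℕ} (hw : IsRep (false :: body))
    (hl : body.length = 2 * k + 2) : F (2 * k + 1) ≤ valF (false :: body) := by
  obtain ⟨d, e, rest, rfl⟩ : ∃ d e rest, body = d :: e :: rest := by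
    match body, hl with
    | d :: e :: rest, _ => exact ⟨d, e, rest, rfl⟩
  have hrest : rest.length = 2 * k := by simpa using hl
  have := fibValFrom_nonneg rest.reverse 1
  have := F_mono (show 2 * k + 1 ≤ 2 * k + 2 by omega)
  have := F_pos (2 * k + 1)
  rw [valF_cons_cons_cons, hrest]
  cases d <;> cases e <;> simp only [bv, Bool.false_eq_true, if_false, if_true, zero_mul, one_mul]
  · exact absurd ⟨rest, rfl⟩ hw.2.2.1
  all_goals omega

theorem valF_mem_Ik {w : List Bool} {k : ℕ} (hw : IsRep w) (hl : w.length = 2 * k + 1) :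
    valF w ∈ Ik k := by
  obtain ⟨T, body, rfl⟩ := List.exists_cons_of_ne_nil (List.ne_nil_of_length_eq_add_one hl)
  have hbody : body.length = 2 * k := by simpa using hl
  have := fibValFrom_nonneg body.reverse 1
  have := fibValFrom_one_lt body.reverse (no11_reverse hw.2.1.tail)
  rw [List.length_reverse, hbody] at this
  have := F_pos (2 * k)
  show _ ∧ _
  rw [valF_cons, hbody]
  cases T <;> simp only [bv, Bool.false_eq_true, if_false, if_true, zero_mul, one_mul] <;> omega

theorem Iext_mono : Monotone Iext := by
  refine monotone_nat_of_le_succ fun k => ?_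
  cases k with
  | zero => exact Set.empty_subset _
  | succ k =>
    rintro n ⟨hlo, hhi⟩
    have := F_mono (show 2 * k ≤ 2 * (k + 1) by omega)
    have := F_mono (show 2 * k + 1 ≤ 2 * (k + 1) + 1 by omega)
    exact ⟨by omega, by omega⟩

theorem eq_of_mem_Iext_diff {n : ℤ} {i j : ℕ} (hi : n ∈ Iext (i + 1) \ Iext i)
    (hj : n ∈ Iext (j + 1) \ Iext j) : i = j := by
  by_contra hne
  rcases Nat.lt_or_gt_of_ne hne with h | h
  · exact hj.2 (Iext_mono (Nat.succ_le_of_lt h) hi.1)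
  · exact hi.2 (Iext_mono (Nat.succ_le_of_lt h) hj.1)

theorem valF_mem_Iext_diff {w : List Bool} {k : ℕ} (hw : IsRep w) (hl : w.length = 2 * k + 1) :
    valF w ∈ Iext (k + 1) \ Iext k := by
  refine ⟨valF_mem_Ik hw hl, ?_⟩
  cases k with
  | zero => exact Set.notMem_empty _
  | succ k =>
    rintro ⟨hlo, hhi⟩
    obtain ⟨T, body, rfl⟩ := List.exists_cons_of_ne_nil (List.ne_nil_of_length_eq_add_one hl)
    have hbody : body.length = 2 * k + 2 := by simp at hl; omega
    cases T
    · exact absurd (le_valF_of_head_false hw hbody) (by omega)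
    · exact absurd (valF_lt_of_head_true hw hbody) (by omega)

theorem valF_neg_of_head_true {body : List Bool} (hw : IsRep (true :: body)) :
    valF (true :: body) < 0 := by
  obtain ⟨k, hk⟩ := hw.exists_length_eq
  cases k with
  | zero =>
    obtain rfl : body = [] := by simpa using hk
    decide
  | succ k =>
    have := valF_lt_of_head_true hw (by simp at hk; omega)
    have := F_pos (2 * k)
    omega

theorem valF_nonneg_of_head_false (body : List Bool) : 0 ≤ valF (false :: body) := by
  simpa [valF_cons, bv] using fibValFrom_nonneg body.reverse 1

theorem valF_injOn : Set.InjOn valF {w | IsRep w} := by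
  intro w (hw : IsRep w) w' (hw' : IsRep w') h
  obtain ⟨k, hk⟩ := hw.exists_length_eq
  obtain ⟨k', hk'⟩ := hw'.exists_length_eq
  have hkk : k = k' :=
    eq_of_mem_Iext_diff (valF_mem_Iext_diff hw hk) (h ▸ valF_mem_Iext_diff hw' hk')
  obtain ⟨T, body, rfl⟩ := List.exists_cons_of_ne_nil (List.ne_nil_of_length_eq_add_one hk)
  obtain ⟨T', body', rfl⟩ := List.exists_cons_of_ne_nil (List.ne_nil_of_length_eq_add_one hk')
  have hlen : body.length = body'.length := by simp at hk hk'; omega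
  obtain rfl : T = T' := by
    cases T <;> cases T'
    · rfl
    · have := valF_nonneg_of_head_false body
      have := valF_neg_of_head_true hw'
      omega
    · have := valF_neg_of_head_true hw
      have := valF_nonneg_of_head_false body'
      omega
    · rfl
  rw [valF_cons, valF_cons, hlen, sub_left_inj] at h
  have hbody : body.reverse = body'.reverse := eq_of_fibValFrom_one_eq (by simpa using hlen)
    (no11_reverse hw.2.1.tail) (no11_reverse hw'.2.1.tail) h
  rw [List.reverse_inj.mp hbody]

theorem IsRep.exists_eq_append_h3 {w : List Bool} {k : ℕ} (hw : IsRep w)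
    (hl : w.length = 2 * k + 3) :
    ∃ (u : List Bool) (ℓ : Fin 3), w = u ++ h3 ℓ ∧ IsRep u ∧ u.length = 2 * k + 1 := by
  obtain ⟨u, d1, d0, rfl⟩ : ∃ u d1 d0, w = u ++ [d1, d0] := by
    rcases List.eq_nil_or_concat' w with rfl | ⟨w', d0, rfl⟩
    · simp at hl
    rcases List.eq_nil_or_concat' w' with rfl | ⟨u, d1, rfl⟩
    · simp at hl
    exact ⟨u, d1, d0, by simp⟩
  have hu : u.length = 2 * k + 1 := by simp at hl; omega
  have hrep : IsRep u :=
    ⟨⟨k, hu⟩, hw.2.1.left_of_append, fun hp => hw.2.2.1 (hp.trans (List.prefix_append _ _)),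
      fun hp => hw.2.2.2 (hp.trans (List.prefix_append _ _))⟩
  have hd : ¬(d1 = true ∧ d0 = true) := (List.isChain_cons_cons.mp hw.2.1.right_of_append).1
  cases d1 <;> cases d0
  · exact ⟨u, 0, rfl, hrep, hu⟩
  · exact ⟨u, 1, rfl, hrep, hu⟩
  · exact ⟨u, 2, rfl, hrep, hu⟩
  · exact absurd ⟨rfl, rfl⟩ hd

/-! ### The morphism and the windows of the fixed point -/

def phi2 (w : List Bool) : List Bool := phi (phi w)

theorem phi_append (u v : List Bool) : phi (u ++ v) = phi u ++ phi v := List.flatMap_append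

theorem phi2_append (u v : List Bool) : phi2 (u ++ v) = phi2 u ++ phi2 v := by
  rw [phi2, phi_append, phi_append, phi2, phi2]

theorem phi2_cons (c : Bool) (w : List Bool) : phi2 (c :: w) = phi2L c ++ phi2 w := by
  rw [← List.singleton_append, phi2_append]
  cases c <;> rfl

theorem length_phi (w : List Bool) : (phi w).length = w.length + w.count false := by
  induction w with
  | nil => rfl
  | cons c w ih =>
    rw [← List.singleton_append, phi_append, List.length_append, ih]
    cases c <;> simp [phi, phiL] <;> omega

theorem count_false_phi (w : List Bool) : (phi w).count false = w.length := by
  induction w with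
  | nil => rfl
  | cons c w ih =>
    rw [← List.singleton_append, phi_append, List.count_append, ih]
    cases c <;> simp [phi, phiL] <;> omega

theorem length_phi2 (w : List Bool) : (phi2 w).length = 2 * w.length + w.count false := by
  rw [phi2, length_phi, count_false_phi, length_phi]
  ring

theorem length_phi2_phi2 (w : List Bool) :
    ((phi2 (phi2 w)).length : ℤ) = 3 * (phi2 w).length - w.length := by
  have hcount : (phi2 w).count false = w.length + w.count false := by
    rw [phi2, count_false_phi, length_phi]
  rw [length_phi2 (phi2 w), hcount, length_phi2]
  push_cast
  ring

theorem iterate_phi_append (k : ℕ) (u v : List Bool) :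
    phi^[k] (u ++ v) = phi^[k] u ++ phi^[k] v := by
  induction k generalizing u v with
  | zero => rfl
  | succ k ih => rw [Function.iterate_succ_apply, Function.iterate_succ_apply,
      Function.iterate_succ_apply, phi_append, ih]

theorem length_iterate_phi (k : ℕ) :
    ((phi^[k] [false]).length : ℤ) = F (k + 1) ∧ ((phi^[k] [true]).length : ℤ) = F k := by
  induction k with
  | zero => exact ⟨rfl, rfl⟩
  | succ k ih =>
    rw [Function.iterate_succ_apply, Function.iterate_succ_apply,
      show phi [false] = [false] ++ [true] from rfl, iterate_phi_append, List.length_append]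
    exact ⟨by push_cast; rw [ih.1, ih.2, F_add_two], ih.1⟩

/-- The window `φ^{2k}(b).φ^{2k}(a)` of the fixed point around the origin. -/
def window (k : ℕ) : List Bool := phi^[2 * k] [true] ++ phi^[2 * k] [false]

theorem window_succ (k : ℕ) : window (k + 1) = phi2 (window k) := by
  have h (v : List Bool) : phi^[2 * (k + 1)] v = phi2 (phi^[2 * k] v) := by
    rw [Nat.mul_succ, Nat.add_comm, Function.iterate_add_apply]; rfl
  rw [window, h, h, ← phi2_append, window]

theorem length_window (k : ℕ) : ((window k).length : ℤ) = F (2 * k) + F (2 * k + 1) := by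
  rw [window, List.length_append]
  push_cast
  rw [(length_iterate_phi _).1, (length_iterate_phi _).2]

theorem x_eq_getD_window (x : ℤ → Bool)
    (hxpos : ∀ k : ℕ, ∀ n : ℤ, 0 ≤ n → n < ((phi^[2*k]) [false]).length →
      x n = ((phi^[2*k]) [false]).getD n.toNat false)
    (hxneg : ∀ k : ℕ, ∀ n : ℤ, -(((phi^[2*k]) [true]).length : ℤ) ≤ n → n < 0 →
      x n = ((phi^[2*k]) [true]).getD
              ((((phi^[2*k]) [true]).length : ℤ) + n).toNat false)
    (k : ℕ) (n : ℤ) (hn : n ∈ Ik k) :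
    x n = (window k).getD (n + F (2 * k)).toNat false := by
  obtain ⟨hlenA, hlenB⟩ := length_iterate_phi (2 * k)
  obtain ⟨hlo, hhi⟩ := hn
  rw [window]
  rcases le_or_gt 0 n with h0 | h0
  · rw [hxpos k n h0 (by omega), List.getD_append_right _ _ _ _ (by omega)]
    congr 1
    omega
  · rw [hxneg k n (by omega) h0, List.getD_append _ _ _ _ (by omega)]
    congr 1
    omega

/-! ### Desubstitution -/

theorem lt_length_phi2L_getLastD {u : List Bool} {ℓ : Fin 3} (h : no11 (u ++ h3 ℓ)) :
    (ℓ : ℕ) < (phi2L (u.getLastD false)).length := by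
  rcases List.eq_nil_or_concat' u with rfl | ⟨u', c, rfl⟩
  · fin_cases ℓ <;> decide
  have hc : ¬(c = true ∧ h3 ℓ = true :: (h3 ℓ).tail) := fun ⟨hc, hℓ⟩ => by
    rw [List.append_assoc, List.singleton_append, hℓ, hc] at h
    exact (List.isChain_cons_cons.mp h.right_of_append).1 ⟨rfl, rfl⟩
  fin_cases ℓ <;> cases c <;> simp_all [h3, phi2L, phi, phiL]

theorem getD_phi2L_eq_getLastD_append_h3 {c : Bool} {ℓ : Fin 3}
    (hℓ : (ℓ : ℕ) < (phi2L c).length) (u : List Bool) :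
    (phi2L c).getD ℓ false = (u ++ h3 ℓ).getLastD false := by
  fin_cases ℓ <;> cases c <;> simp_all [h3, phi2L, phi, phiL]

theorem length_phi2_take_phi2L {c : Bool} {ℓ : Fin 3} (hℓ : (ℓ : ℕ) < (phi2L c).length) :
    ((phi2 ((phi2L c).take ℓ)).length : ℤ) = fibValFrom (h3 ℓ).reverse 3 := by
  fin_cases ℓ <;> cases c <;> simp_all [h3, phi2L, phi2, phi, phiL, fibValFrom, bv, F]

theorem phi2_eq_take_append {w : List Bool} {q : ℕ} (hq : q < w.length) :
    phi2 w = phi2 (w.take q) ++ (phi2L (w.getD q false) ++ phi2 (w.drop (q + 1))) := by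
  conv_lhs => rw [← List.take_append_drop q w, List.drop_eq_getElem_cons hq]
  rw [phi2_append, phi2_cons, List.getD_eq_getElem _ _ hq]

/-- Position `p` of the window carries `x_{valF w}`, and `φ²` maps it to the block of `x` that
starts at `valF (w ++ 00)`. -/
theorem getD_window_and_length_phi2_take (k : ℕ) {w : List Bool} (hw : IsRep w)
    (hl : w.length = 2 * k + 1) {p : ℕ} (hp : (p : ℤ) = valF w + F (2 * k)) :
    (window k).getD p false = w.getLastD false ∧
      ((phi2 ((window k).take p)).length : ℤ) = valF (w ++ [false, false]) + F (2 * k + 2) := by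
  induction k generalizing w p with
  | zero =>
    obtain ⟨c, rfl⟩ := List.length_eq_one_iff.mp hl
    cases c
    · obtain rfl : p = 1 := by rw [show valF [false] + F (2 * 0) = 1 by decide] at hp; omega
      decide
    · obtain rfl : p = 0 := by rw [show valF [true] + F (2 * 0) = 0 by decide] at hp; omega
      decide
  | succ k ih =>
    obtain ⟨u, ℓ, rfl, hu, hul⟩ := hw.exists_eq_append_h3 hl
    have hune : u ≠ [] := List.ne_nil_of_length_eq_add_one hul
    obtain ⟨hlo, hhi⟩ := valF_mem_Ik hu hul
    obtain ⟨q, hq⟩ : ∃ q : ℕ, (q : ℤ) = valF u + F (2 * k) :=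
      ⟨_, Int.toNat_of_nonneg (by omega)⟩
    have hqlt : q < (window k).length := by have := length_window k; omega
    obtain ⟨hletter, hlength⟩ := ih hu hul hq
    have hPlen : ((window k).take q).length = q := List.length_take_of_le hqlt.le
    have hℓ := hletter ▸ lt_length_phi2L_getLastD hw.2.1
    have hsplit := window_succ k ▸ phi2_eq_take_append hqlt
    have hpP : p = (phi2 ((window k).take q)).length + ℓ := by
      have := valF_append_h3 hune ℓ
      rw [Nat.mul_succ] at hp
      omega
    constructor
    · rw [hsplit, hpP, List.getD_append_right _ _ _ _ (Nat.le_add_right _ _),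
        Nat.add_sub_cancel_left, List.getD_append _ _ _ _ hℓ]
      exact getD_phi2L_eq_getLastD_append_h3 hℓ u
    · rw [hsplit, hpP, List.take_length_add_append, List.take_append_of_le_length hℓ.le,
        phi2_append, List.length_append, Nat.cast_add, length_phi2_phi2, hlength, hPlen, hq,
        length_phi2_take_phi2L hℓ, valF_append_h3_append_zeros hune,
        show 2 * (k + 1) + 2 = 2 * k + 4 by ring, F_add_four]
      ring

theorem apply_valF_eq_getLastD {x : ℤ → Bool}
    (hx : ∀ (k : ℕ) (n : ℤ), n ∈ Ik k → x n = (window k).getD (n + F (2 * k)).toNat false)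
    {w : List Bool} (hw : IsRep w) : x (valF w) = w.getLastD false := by
  obtain ⟨k, hk⟩ := hw.exists_length_eq
  have hmem := valF_mem_Ik hw hk
  have hpos : 0 ≤ valF w + F (2 * k) := by have := hmem.1; omega
  rw [hx k _ hmem]
  exact (getD_window_and_length_phi2_take k hw hk (Int.toNat_of_nonneg hpos)).1

/-- Desubstitution step for the bi-infinite fixed point `x = lim φ^{2k}(b.a)`:
for every `n ∉ {−1, 0}` there are `m ∈ ℤ`, `ℓ ∈ {0,1,2}` with
`x_n = φ²(x_m)[ℓ]` and `rep_F(n) = rep_F(m)·h(ℓ)`; moreover if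
`n ∈ I_i \ I_{i−1}` then `m ∈ I_{i−1} \ I_{i−2}`. -/
theorem fixed_point_desubstitution
    (repF : ℤ → List Bool)
    (hrep : ∀ n : ℤ, IsRep (repF n) ∧ valF (repF n) = n)
    (x : ℤ → Bool)
    (hxpos : ∀ k : ℕ, ∀ n : ℤ, 0 ≤ n → n < ((phi^[2*k]) [false]).length →
      x n = ((phi^[2*k]) [false]).getD n.toNat false)
    (hxneg : ∀ k : ℕ, ∀ n : ℤ, -(((phi^[2*k]) [true]).length : ℤ) ≤ n → n < 0 →
      x n = ((phi^[2*k]) [true]).getD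
              ((((phi^[2*k]) [true]).length : ℤ) + n).toNat false)
    (n : ℤ) (hn0 : n ≠ 0) (hn1 : n ≠ -1) :
    ∃ m : ℤ, ∃ ℓ : Fin 3,
      x n = (phi2L (x m)).getD (ℓ : ℕ) false ∧
      repF n = repF m ++ h3 ℓ ∧
      ∀ i : ℕ, n ∈ Iext (i+1) \ Iext i → m ∈ Iext i \ Iext (i-1) := by
  have hx := x_eq_getD_window x hxpos hxneg
  obtain ⟨hw, hval⟩ := hrep n
  obtain ⟨K, hK⟩ := hw.exists_length_eq
  have hshell : n ∈ Iext (K + 1) \ Iext K := hval ▸ valF_mem_Iext_diff hw hK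
  obtain ⟨k, rfl⟩ : ∃ k, K = k + 1 := by
    refine Nat.exists_eq_add_one.mpr (Nat.pos_of_ne_zero fun hK0 => ?_)
    subst hK0
    obtain ⟨hlo, hhi⟩ : -1 ≤ n ∧ n < 1 := hshell.1
    omega
  obtain ⟨u, ℓ, hdec, hu, hul⟩ := hw.exists_eq_append_h3 hK
  have hm : repF (valF u) = u := valF_injOn (hrep _).1 hu (hrep _).2
  refine ⟨valF u, ℓ, ?_, hm.symm ▸ hdec, fun i hi => ?_⟩
  · rw [← hval, apply_valF_eq_getLastD hx hw, apply_valF_eq_getLastD hx hu, hdec]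
    exact (getD_phi2L_eq_getLastD_append_h3 (lt_length_phi2L_getLastD (hdec ▸ hw.2.1)) u).symm
  · obtain rfl := eq_of_mem_Iext_diff hi hshell
    exact valF_mem_Iext_diff hu hul
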